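/- For every fixed μ_s > 0, both limits lim_{μ_d→0⁺} R(μ_s,μ_d) and lim_{μ_d→0⁺} R̃(μ_s,μ_d) exist and are equal to μ_s e^{−μ_s}(α + p₀)(1 − h((sα + p₀/2)/(α + p₀))) + e^{−μ_s}p₀ − (1 − e^{−αμ_s} + p₀)·η·h((s(1 − e^{−αμ_s}) + p₀/2)/(1 − e^{−αμ_s} + p₀)). -/

import Mathlib

/-- Binary entropy function (base-2). Note `Real.logb 2 0 = 0`, so `binEnt 0 = binEnt 1 = 0`. -/
noncomputable def binEnt (x : ℝ) : ℝ :=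
  -x * Real.logb 2 x - (1 - x) * Real.logb 2 (1 - x)

/-- Estimate `b̂(μ)` of the phase-error detection rate of the single photon pulse. -/
noncomputable def bHat (α s p₀ μ : ℝ) : ℝ :=
  (s * (1 - Real.exp (-α * μ)) * Real.exp μ + (p₀ / 2) * (Real.exp μ - 1)) / μ

/-- Estimate `ĉ(μ₁,μ₂)` of the rate that the single photon pulse is detected
without phase error. -/
noncomputable def cHat (α s p₀ μ₁ μ₂ : ℝ) : ℝ :=
  (μ₂ ^ 2 * Real.exp μ₁ * ((1 - s) * (1 - Real.exp (-α * μ₁)) + (p₀ / 2) * (1 - Real.exp (-μ₁)))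
    - μ₁ ^ 2 * Real.exp μ₂ * ((1 - s) * (1 - Real.exp (-α * μ₂)) + (p₀ / 2) * (1 - Real.exp (-μ₂))))
  / (μ₁ * μ₂ * (μ₂ - μ₁))

/-- Estimate `â(μ₁,μ₂)` of the detection rate of the single photon pulse. -/
noncomputable def aHat (α p₀ μ₁ μ₂ : ℝ) : ℝ :=
  (μ₂ ^ 2 * Real.exp μ₁ * ((1 - Real.exp (-α * μ₁)) + p₀ * (1 - Real.exp (-μ₁)))
    - μ₁ ^ 2 * Real.exp μ₂ * ((1 - Real.exp (-α * μ₂)) + p₀ * (1 - Real.exp (-μ₂))))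
  / (μ₁ * μ₂ * (μ₂ - μ₁))

/-- Detection rate `p₊(μ)` of a pulse of intensity `μ`. -/
noncomputable def pPlus (α p₀ μ : ℝ) : ℝ := 1 - Real.exp (-α * μ) + p₀

/-- Error rate `e₊(μ)` of a pulse of intensity `μ`. -/
noncomputable def ePlus (α s p₀ μ : ℝ) : ℝ :=
  (s * (1 - Real.exp (-α * μ)) + p₀ / 2) / pPlus α p₀ μ

/-- The improved asymptotic key generation rate `R(μ_s, μ_d)` for `0 < μ_d < μ_s`. -/
noncomputable def Rrate (α s p₀ η μs μd : ℝ) : ℝ :=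
  μs * Real.exp (-μs) * (cHat α s p₀ μd μs + bHat α s p₀ μd) *
      (1 - binEnt (bHat α s p₀ μd / (cHat α s p₀ μd μs + bHat α s p₀ μd)))
    + Real.exp (-μs) * p₀ - pPlus α p₀ μs * η * binEnt (ePlus α s p₀ μs)

/-- The conventional asymptotic key generation rate `R̃(μ_s, μ_d)` for `0 < μ_d < μ_s`. -/
noncomputable def Rtilde (α s p₀ η μs μd : ℝ) : ℝ :=
  μs * Real.exp (-μs) * aHat α p₀ μd μs *
      (1 - binEnt (bHat α s p₀ μd / aHat α p₀ μd μs))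
    + Real.exp (-μs) * p₀ - pPlus α p₀ μs * η * binEnt (ePlus α s p₀ μs)

/-!
Each of `b̂`, `ĉ`, `â` is an elementary expression in the quotient `G(μ)/μ` for a function
`G(μ) = e^μ (c₁ (1 - e^{-αμ}) + c₂ (1 - e^{-μ}))` with `G(0) = 0` and `G'(0) = c₁ α + c₂`.
Hence `b̂ → sα + p₀/2`, `ĉ → (1 - s)α + p₀/2` and `â → α + p₀` as `μ_d → 0⁺`; since `ĉ + b̂` and
`â` both tend to `α + p₀ ≠ 0` and the binary entropy is continuous on all of `ℝ`, both rates
converge to the stated value.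
-/

open Filter Real Set Topology

noncomputable def expWeightedGain (α c₁ c₂ μ : ℝ) : ℝ :=
  exp μ * (c₁ * (1 - exp (-α * μ)) + c₂ * (1 - exp (-μ)))

lemma expWeightedGain_zero (α c₁ c₂ : ℝ) : expWeightedGain α c₁ c₂ 0 = 0 := by
  simp [expWeightedGain]

lemma hasDerivAt_expWeightedGain_zero (α c₁ c₂ : ℝ) :
    HasDerivAt (expWeightedGain α c₁ c₂) (c₁ * α + c₂) 0 := by
  have h := (hasDerivAt_exp 0).mul
    (((((hasDerivAt_id (0 : ℝ)).const_mul (-α)).exp.const_sub 1).const_mul c₁).add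
      (((hasDerivAt_id (0 : ℝ)).neg.exp.const_sub 1).const_mul c₂))
  exact h.congr_deriv (by simp)

lemma bHat_eq (α s p₀ μ : ℝ) : bHat α s p₀ μ = expWeightedGain α s (p₀ / 2) μ / μ := by
  have h : exp μ * exp (-μ) = 1 := by rw [← exp_add, add_neg_cancel, exp_zero]
  rw [bHat, expWeightedGain]
  congr 1
  linear_combination (p₀ / 2) * h

lemma cHat_eq (α s p₀ μ₁ μ₂ : ℝ) :
    cHat α s p₀ μ₁ μ₂ =
      (μ₂ ^ 2 * expWeightedGain α (1 - s) (p₀ / 2) μ₁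
        - μ₁ ^ 2 * expWeightedGain α (1 - s) (p₀ / 2) μ₂) / (μ₁ * μ₂ * (μ₂ - μ₁)) := by
  simp only [cHat, expWeightedGain, mul_assoc]

lemma aHat_eq (α p₀ μ₁ μ₂ : ℝ) :
    aHat α p₀ μ₁ μ₂ =
      (μ₂ ^ 2 * expWeightedGain α 1 p₀ μ₁ - μ₁ ^ 2 * expWeightedGain α 1 p₀ μ₂)
        / (μ₁ * μ₂ * (μ₂ - μ₁)) := by
  simp only [aHat, expWeightedGain, mul_assoc, one_mul]

lemma tendsto_div_self_of_hasDerivAt_zero {f : ℝ → ℝ} {L : ℝ} (hf : HasDerivAt f L 0)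
    (hf₀ : f 0 = 0) : Tendsto (fun μ => f μ / μ) (𝓝[≠] 0) (𝓝 L) :=
  hf.tendsto_slope.congr fun μ => by simp [slope_def_field, hf₀]

lemma tendsto_decoyQuotient {G : ℝ → ℝ} {L μs : ℝ} (hG : HasDerivAt G L 0) (hG₀ : G 0 = 0)
    (hμs : μs ≠ 0) :
    Tendsto (fun μ => (μs ^ 2 * G μ - μ ^ 2 * G μs) / (μ * μs * (μs - μ))) (𝓝[≠] 0) (𝓝 L) := by
  have hμ : Tendsto (fun μ : ℝ => μ) (𝓝[≠] 0) (𝓝 0) :=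
    tendsto_nhdsWithin_of_tendsto_nhds tendsto_id
  have hden : Tendsto (fun μ => μs * (μs - μ)) (𝓝[≠] 0) (𝓝 (μs * (μs - 0))) :=
    tendsto_const_nhds.mul (tendsto_const_nhds.sub hμ)
  have hlim := (((tendsto_div_self_of_hasDerivAt_zero hG hG₀).const_mul (μs ^ 2)).sub
    (hμ.mul_const (G μs))).div hden (by simpa using hμs)
  have hL : (μs ^ 2 * L - 0 * G μs) / (μs * (μs - 0)) = L := by field_simp; ring
  rw [hL] at hlim
  refine hlim.congr' ?_
  filter_upwards [self_mem_nhdsWithin,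
    nhdsWithin_le_nhds (eventually_ne_nhds hμs.symm)] with μ (hμ₀ : μ ≠ 0) hμμs
  have : μs - μ ≠ 0 := sub_ne_zero.mpr hμμs.symm
  rw [Pi.div_apply]
  field_simp

lemma tendsto_bHat (α s p₀ : ℝ) :
    Tendsto (fun μ => bHat α s p₀ μ) (𝓝[≠] 0) (𝓝 (s * α + p₀ / 2)) := by
  simpa only [bHat_eq] using tendsto_div_self_of_hasDerivAt_zero
    (hasDerivAt_expWeightedGain_zero α s (p₀ / 2)) (expWeightedGain_zero α s (p₀ / 2))

lemma tendsto_cHat (α s p₀ : ℝ) {μs : ℝ} (hμs : μs ≠ 0) :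
    Tendsto (fun μ => cHat α s p₀ μ μs) (𝓝[≠] 0) (𝓝 ((1 - s) * α + p₀ / 2)) := by
  simpa only [cHat_eq] using tendsto_decoyQuotient
    (hasDerivAt_expWeightedGain_zero α (1 - s) (p₀ / 2)) (expWeightedGain_zero α _ _) hμs

lemma tendsto_aHat (α p₀ : ℝ) {μs : ℝ} (hμs : μs ≠ 0) :
    Tendsto (fun μ => aHat α p₀ μ μs) (𝓝[≠] 0) (𝓝 (α + p₀)) := by
  simpa only [aHat_eq, one_mul] using tendsto_decoyQuotient
    (hasDerivAt_expWeightedGain_zero α 1 p₀) (expWeightedGain_zero α 1 p₀) hμs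

lemma continuous_binEnt : Continuous binEnt := by
  have h : Continuous fun x : ℝ => x * logb 2 x := by
    simpa only [logb, mul_div_assoc] using continuous_mul_log.div_const (log 2)
  have : binEnt = fun x => -(x * logb 2 x) - (1 - x) * logb 2 (1 - x) := by
    funext x
    rw [binEnt, neg_mul]
  rw [this]
  exact h.neg.sub (h.comp (continuous_const.sub continuous_id))

lemma tendsto_keyRate {l : Filter ℝ} {b y : ℝ → ℝ} {b₀ y₀ : ℝ} (hb : Tendsto b l (𝓝 b₀))
    (hy : Tendsto y l (𝓝 y₀)) (hy₀ : y₀ ≠ 0) (c d e : ℝ) :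
    Tendsto (fun μ => c * y μ * (1 - binEnt (b μ / y μ)) + d - e) l
      (𝓝 (c * y₀ * (1 - binEnt (b₀ / y₀)) + d - e)) :=
  ((((hy.const_mul c).mul
    (((continuous_binEnt.tendsto _).comp (hb.div hy hy₀)).const_sub 1)).add_const d).sub_const e)

theorem stmt7_general (α s p₀ η μs : ℝ)
    (hα : 0 < α) (hp : 0 < p₀)
    (hμs : 0 < μs) :
    Filter.Tendsto (fun μd => Rrate α s p₀ η μs μd)
      (nhdsWithin 0 (Set.Ioo 0 μs))
      (nhds (μs * Real.exp (-μs) * (α + p₀) *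
          (1 - binEnt ((s * α + p₀ / 2) / (α + p₀)))
        + Real.exp (-μs) * p₀
        - (1 - Real.exp (-α * μs) + p₀) * η *
            binEnt ((s * (1 - Real.exp (-α * μs)) + p₀ / 2) / (1 - Real.exp (-α * μs) + p₀))))
    ∧
    Filter.Tendsto (fun μd => Rtilde α s p₀ η μs μd)
      (nhdsWithin 0 (Set.Ioo 0 μs))
      (nhds (μs * Real.exp (-μs) * (α + p₀) *
          (1 - binEnt ((s * α + p₀ / 2) / (α + p₀)))
        + Real.exp (-μs) * p₀
        - (1 - Real.exp (-α * μs) + p₀) * η *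
            binEnt ((s * (1 - Real.exp (-α * μs)) + p₀ / 2) / (1 - Real.exp (-α * μs) + p₀)))) := by
  have hl : 𝓝[Ioo 0 μs] (0 : ℝ) ≤ 𝓝[≠] 0 := nhdsWithin_mono 0 fun μ hμ => hμ.1.ne'
  have hαp₀ : α + p₀ ≠ 0 := by positivity
  have hb := (tendsto_bHat α s p₀).mono_left hl
  have hcb : Tendsto (fun μ => cHat α s p₀ μ μs + bHat α s p₀ μ) (𝓝[Ioo 0 μs] 0)
      (𝓝 (α + p₀)) := by
    convert ((tendsto_cHat α s p₀ hμs.ne').mono_left hl).add hb using 2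
    ring
  have ha := (tendsto_aHat α p₀ hμs.ne').mono_left hl
  exact ⟨tendsto_keyRate hb hcb hαp₀ _ _ _, tendsto_keyRate hb ha hαp₀ _ _ _⟩

theorem stmt7 (α s p₀ η μs : ℝ)
    (hα : 0 < α) (hα1 : α ≤ 1) (hs0 : 0 ≤ s) (hs : s < 1 / 2) (hp : 0 < p₀) (hη : 0 ≤ η)
    (hμs : 0 < μs) :
    Filter.Tendsto (fun μd => Rrate α s p₀ η μs μd)
      (nhdsWithin 0 (Set.Ioo 0 μs))
      (nhds (μs * Real.exp (-μs) * (α + p₀) *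
          (1 - binEnt ((s * α + p₀ / 2) / (α + p₀)))
        + Real.exp (-μs) * p₀
        - (1 - Real.exp (-α * μs) + p₀) * η *
            binEnt ((s * (1 - Real.exp (-α * μs)) + p₀ / 2) / (1 - Real.exp (-α * μs) + p₀))))
    ∧
    Filter.Tendsto (fun μd => Rtilde α s p₀ η μs μd)
      (nhdsWithin 0 (Set.Ioo 0 μs))
      (nhds (μs * Real.exp (-μs) * (α + p₀) *
          (1 - binEnt ((s * α + p₀ / 2) / (α + p₀)))
        + Real.exp (-μs) * p₀
        - (1 - Real.exp (-α * μs) + p₀) * η *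
            binEnt ((s * (1 - Real.exp (-α * μs)) + p₀ / 2) / (1 - Real.exp (-α * μs) + p₀)))) :=
  stmt7_general α s p₀ η μs hα hp hμs
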